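/- For every n ≥ 1, the simple graph A_n whose vertices are the triangles of Bⁿ(T₀), with two triangles joined by an edge if and only if they are adjacent (share a common side), is isomorphic as a graph to G_n = (Xⁿ, E_n). -/
import Mathlib


/-- A point of the plane. -/
abbrev Pt := ℝ × ℝ

/-- A triangle in the plane: an ordered triple of points. -/
structure Triangle where
  v : Fin 3 → Pt

/-- A triangle is nondegenerate if its vertices are affinely independent. -/
def Triangle.Nondeg (T : Triangle) : Prop := AffineIndependent ℝ T.v

/-- The barycenter of a triangle. -/
noncomputable def Triangle.bary (T : Triangle) : Pt :=
  (3 : ℝ)⁻¹ • (T.v 0 + T.v 1 + T.v 2)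

/-- The child `[aᵢ, (aᵢ+aⱼ)/2, b]` of a triangle produced by barycentric subdivision. -/
noncomputable def Triangle.child (T : Triangle) (i j : Fin 3) : Triangle :=
  ⟨![T.v i, (2 : ℝ)⁻¹ • (T.v i + T.v j), T.bary]⟩

/-- The barycentric subdivision of a triangle: the set of its six children. -/
noncomputable def BSub (T : Triangle) : Set Triangle :=
  {t | ∃ i j : Fin 3, i ≠ j ∧ t = T.child i j}

/-- `n`-fold iterated barycentric subdivision `Bⁿ(T₀)`. -/
noncomputable def BIter (T₀ : Triangle) : ℕ → Set Triangle
  | 0 => {T₀}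
  | n + 1 => ⋃ t ∈ BIter T₀ n, BSub t

/-- The set of sides of a triangle (as subsets of the plane). -/
def Triangle.sides (T : Triangle) : Set (Set Pt) :=
  {e | ∃ i j : Fin 3, i ≠ j ∧ e = segment ℝ (T.v i) (T.v j)}

/-- The boundary of a triangle: the union of its three sides. -/
def Triangle.bdry (T : Triangle) : Set Pt :=
  segment ℝ (T.v 0) (T.v 1) ∪ segment ℝ (T.v 1) (T.v 2) ∪ segment ℝ (T.v 0) (T.v 2)

/-- Two triangles are adjacent if they are distinct and share a common side. -/
def Adjacent (s t : Triangle) : Prop := s ≠ t ∧ ∃ e, e ∈ s.sides ∧ e ∈ t.sides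

open Classical

/-- Words of length `n` over the alphabet `X = {0,…,5} = ℤ/6`.  (Words are 0-indexed:
the letter `x_k` of the paper, `1 ≤ k ≤ n`, is `x j` for the index `j : Fin n` with
`(j : ℕ) + 1 = k`.) -/
abbrev Wrd (n : ℕ) := Fin n → ZMod 6

/-- `W₁`: words whose second through last letters are all `0`s or `5`s. -/
def W1 (n : ℕ) : Set (Wrd n) :=
  {x | ∀ j : Fin n, 1 ≤ (j : ℕ) → (x j = 0 ∨ x j = 5)}

/-- `W_k` (for `2 ≤ k ≤ n`): words with `x_k ∉ {0,5}` and `x_i ∈ {0,5}` for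
`k < i ≤ n`. -/
def Wk (n k : ℕ) : Set (Wrd n) :=
  {x | ∀ j : Fin n, ((j : ℕ) + 1 = k → ¬(x j = 0 ∨ x j = 5)) ∧
      (k < (j : ℕ) + 1 → (x j = 0 ∨ x j = 5))}

/-- `F₁`: unordered pairs `{xi, xj}` with `x ∈ X^{n−1}`, `j = i + 1` (mod 6). -/
def F1 (n : ℕ) : Set (Sym2 (Wrd n)) :=
  {e | ∃ u w : Wrd n, e = s(u, w) ∧ (∀ j : Fin n, (j : ℕ) + 1 < n → u j = w j) ∧
      ∀ j : Fin n, (j : ℕ) + 1 = n → w j = u j + 1}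

/-- `F_k` (for `2 ≤ k ≤ n`): unordered pairs `{x i α v, x j α v}` with `x ∈ X^{k−2}`,
`j = i + 1 (mod 6)`, `v ∈ {0,5}^{n−k}`, and `α ∈ {3,4}` if `i` is odd, `α ∈ {1,2}` if
`i` is even.  (Here `i` sits at 1-indexed position `k − 1` and `α` at position `k`.) -/
def Fk (n k : ℕ) : Set (Sym2 (Wrd n)) :=
  {e | ∃ u w : Wrd n, e = s(u, w) ∧
    (∀ j : Fin n, (j : ℕ) + 1 ≠ k - 1 → u j = w j) ∧
    (∀ j : Fin n, (j : ℕ) + 1 = k - 1 → (w j = u j + 1 ∧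
      ((¬ Even (u j) ∧ ∀ j' : Fin n, (j' : ℕ) + 1 = k → (u j' = 3 ∨ u j' = 4)) ∨
        (Even (u j) ∧ ∀ j' : Fin n, (j' : ℕ) + 1 = k → (u j' = 1 ∨ u j' = 2))))) ∧
    (∀ j : Fin n, k < (j : ℕ) + 1 → (u j = 0 ∨ u j = 5))}

/-- The edge set `E_n = ⋃_{k=1}^{n} F_k`. -/
def En (n : ℕ) : Set (Sym2 (Wrd n)) :=
  F1 n ∪ ⋃ k ∈ Finset.Icc 2 n, Fk n k

/-- The graph `A_n` whose vertices are the triangles of `Bⁿ(T₀)`, two of them joined by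
an edge if and only if they are adjacent (share a common side). -/
noncomputable def triGraph (T₀ : Triangle) (n : ℕ) :
    SimpleGraph {t : Triangle // t ∈ BIter T₀ n} :=
  SimpleGraph.fromRel (fun a b => Adjacent a.1 b.1)

/-- The graph `G_n` with vertex set `Xⁿ`, two words joined by an edge if and only if
they form a pair belonging to `E_n`. -/
def wordGraph (n : ℕ) : SimpleGraph (Wrd n) :=
  SimpleGraph.fromRel (fun u w => s(u, w) ∈ En n)


/-! ### Auxiliary development -/

section Aux

/-- Barycentric-coordinate basis attached to a nondegenerate triangle. -/
noncomputable def tbasis (T : Triangle) (hT : T.Nondeg) : AffineBasis (Fin 3) ℝ Pt :=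
  ⟨T.v, hT, by
    rw [hT.affineSpan_eq_top_iff_card_eq_finrank_add_one]
    simp [Module.finrank_prod]⟩

/-- Barycentric coordinates. -/
noncomputable def crd (T : Triangle) (hT : T.Nondeg) (i : Fin 3) : Pt →ᵃ[ℝ] ℝ :=
  (tbasis T hT).coord i

lemma combo2 (f : Pt →ᵃ[ℝ] ℝ) {a c : ℝ} (h : a + c = 1) (p q : Pt) :
    f (a • p + c • q) = a * f p + c * f q := by
  have hd := AffineMap.decomp f
  have h1 : f (a • p + c • q) = f.linear (a • p + c • q) + f 0 := by rw [hd]; simp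
  have h2 : f p = f.linear p + f 0 := by rw [hd]; simp
  have h3 : f q = f.linear q + f 0 := by rw [hd]; simp
  rw [h1, h2, h3, map_add, map_smul, map_smul]
  simp only [smul_eq_mul]; linear_combination (-(f 0)) * h

lemma combo3 (f : Pt →ᵃ[ℝ] ℝ) {a b c : ℝ} (h : a + b + c = 1) (p q r : Pt) :
    f (a • p + b • q + c • r) = a * f p + b * f q + c * f r := by
  have hd := AffineMap.decomp f
  have h1 : f (a • p + b • q + c • r) = f.linear (a • p + b • q + c • r) + f 0 := by rw [hd]; simp
  have h2 : f p = f.linear p + f 0 := by rw [hd]; simp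
  have h3 : f q = f.linear q + f 0 := by rw [hd]; simp
  have h4 : f r = f.linear r + f 0 := by rw [hd]; simp
  rw [h1, h2, h3, h4, map_add, map_add, map_smul, map_smul, map_smul]
  simp only [smul_eq_mul]; linear_combination (-(f 0)) * h

variable {T : Triangle} {hT : T.Nondeg}

lemma crd_vertex (i j : Fin 3) : crd T hT i (T.v j) = if i = j then 1 else 0 :=
  (tbasis T hT).coord_apply i j

lemma crd_self (i : Fin 3) : crd T hT i (T.v i) = 1 := by simp [crd_vertex]

lemma crd_ne {i j : Fin 3} (h : i ≠ j) : crd T hT i (T.v j) = 0 := by simp [crd_vertex, h]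

lemma sum_crd (x : Pt) : crd T hT 0 x + crd T hT 1 x + crd T hT 2 x = 1 := by
  have := (tbasis T hT).sum_coord_apply_eq_one x
  rw [Fin.sum_univ_three] at this
  exact this

lemma recon (hT : T.Nondeg) (x : Pt) :
    x = crd T hT 0 x • T.v 0 + crd T hT 1 x • T.v 1 + crd T hT 2 x • T.v 2 := by
  have := (tbasis T hT).linear_combination_coord_eq_self x
  rw [Fin.sum_univ_three] at this
  exact this.symm

lemma crd_mid (t : Fin 3) (p q : Pt) :
    crd T hT t ((2:ℝ)⁻¹ • (p + q)) = (crd T hT t p + crd T hT t q) / 2 := by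
  have h : (2:ℝ)⁻¹ • (p + q) = (2:ℝ)⁻¹ • p + (2:ℝ)⁻¹ • q := by module
  rw [h, combo2 (crd T hT t) (by norm_num)]
  ring

lemma crd_bary (t : Fin 3) : crd T hT t T.bary = 1/3 := by
  have h : T.bary = (3:ℝ)⁻¹ • T.v 0 + (3:ℝ)⁻¹ • T.v 1 + (3:ℝ)⁻¹ • T.v 2 := by
    rw [Triangle.bary]; module
  rw [h, combo3 (crd T hT t) (by norm_num)]
  fin_cases t <;> simp [crd_vertex]

@[simp] lemma child_v0 (i j : Fin 3) : (T.child i j).v 0 = T.v i := rfl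
@[simp] lemma child_v1 (i j : Fin 3) : (T.child i j).v 1 = (2:ℝ)⁻¹ • (T.v i + T.v j) := rfl
@[simp] lemma child_v2 (i j : Fin 3) : (T.child i j).v 2 = T.bary := rfl

lemma crd_transfer {S : Triangle} (hS : S.Nondeg) (f : Pt →ᵃ[ℝ] ℝ) (z : Pt) :
    f z = crd S hS 0 z * f (S.v 0) + crd S hS 1 z * f (S.v 1) + crd S hS 2 z * f (S.v 2) := by
  conv_lhs => rw [recon hS z]
  rw [combo3 f (sum_crd z)]

lemma mem_segment_of_combo {p q x : Pt} {a c : ℝ} (ha : 0 ≤ a) (hc : 0 ≤ c)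
    (h1 : a + c = 1) (hx : x = a • p + c • q) : x ∈ segment ℝ p q :=
  ⟨a, c, ha, hc, h1, hx.symm⟩

lemma seg_sub_left (p q : Pt) : segment ℝ p ((2:ℝ)⁻¹ • (p + q)) ⊆ segment ℝ p q := by
  intro x hx
  obtain ⟨a, c, ha, hc, h1, hx⟩ := hx
  exact ⟨a + c/2, c/2, by linarith, by linarith, by linarith, by rw [← hx]; module⟩

lemma seg_sub_right (p q : Pt) : segment ℝ q ((2:ℝ)⁻¹ • (p + q)) ⊆ segment ℝ p q := by
  intro x hx
  obtain ⟨a, c, ha, hc, h1, hx⟩ := hx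
  exact ⟨c/2, a + c/2, by linarith, by linarith, by linarith, by rw [← hx]; module⟩

lemma mid_int {p q m x : Pt} (hm : m = (2:ℝ)⁻¹ • (p + q)) (hpq : p ≠ q)
    (h1 : x ∈ segment ℝ p m) (h2 : x ∈ segment ℝ q m) : x = m := by
  obtain ⟨a, c, ha, hc, hac, hx⟩ := h1
  obtain ⟨a', c', ha', hc', hac', hx'⟩ := h2
  have h0 : (a • p + c • m) - (a' • q + c' • m) = (0 : Pt) := by rw [hx, hx']; simp
  have key : (a + (c - c')/2) • (p - q) = (0:Pt) := by
    rw [← h0]; subst hm; match_scalars <;> linarith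
  have hs : a + (c - c')/2 = 0 := by
    rcases smul_eq_zero.mp key with h | h
    · exact h
    · exact absurd (sub_eq_zero.mp h) hpq
  have ha0 : a = 0 := by linarith
  have hc1 : c = 1 := by linarith
  rw [← hx, ha0, hc1]; simp

lemma segment_endpoints {p q p' q' : Pt} (hpq : p ≠ q)
    (h : segment ℝ p q = segment ℝ p' q') : (p = p' ∧ q = q') ∨ (p = q' ∧ q = p') := by
  have hp : p ∈ segment ℝ p' q' := h ▸ left_mem_segment ℝ p q
  have hp' : p' ∈ segment ℝ p q := h ▸ left_mem_segment ℝ p' q'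
  have hq' : q' ∈ segment ℝ p q := h ▸ right_mem_segment ℝ p' q'
  obtain ⟨a, c, ha, hc, hac, hxp⟩ := hp
  obtain ⟨b, d, hb, hd, hbd, hxq⟩ := h ▸ right_mem_segment ℝ p q
  obtain ⟨e, f, he, hf, hef, hxp'⟩ := hp'
  obtain ⟨g, k, hg, hk, hgk, hxq'⟩ := hq'
  have key : (a*f + c*k) • (p - q) = (0:Pt) := by
    have hrw : p = a • (e • p + f • q) + c • (g • p + k • q) := by
      conv_lhs => rw [← hxp]
      rw [hxp', hxq']
    have h2 : (a*f + c*k) • (p - q) =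
        (a*e + c*g + a*f + c*k - 1) • p - (a • (e • p + f • q) + c • (g • p + k • q) - p) := by
      match_scalars <;> ring
    rw [h2, ← hrw]
    have h3 : a*e + c*g + a*f + c*k - 1 = 0 := by nlinarith
    rw [h3]; simp
  have hz : a*f + c*k = 0 := by
    rcases smul_eq_zero.mp key with h' | h'
    · exact h'
    · exact absurd (sub_eq_zero.mp h') hpq
  have haf : a*f = 0 := by nlinarith
  have hck : c*k = 0 := by nlinarith
  rcases mul_eq_zero.mp haf with h1 | h1
  · have hc1 : c = 1 := by linarith
    have hpq' : p = q' := by rw [← hxp, h1, hc1]; simp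
    refine Or.inr ⟨hpq', ?_⟩
    have key2 : (1 - b*f) • (q - p) = (0:Pt) := by
      have hrw : q = b • (e • p + f • q) + d • p := by
        conv_lhs => rw [← hxq]
        rw [hxp', ← hpq']
      have h2 : (1 - b*f) • (q - p) =
          (q - (b • (e • p + f • q) + d • p)) - (b*e + d + b*f - 1) • p := by
        match_scalars
        all_goals try ring1
        all_goals linear_combination (2*b)*hef + 2*hbd
      rw [h2, ← hrw]
      have h3 : b*e + d + b*f - 1 = 0 := by nlinarith
      rw [h3]; simp
    rcases smul_eq_zero.mp key2 with h' | h'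
    · have hbf : b*f = 1 := by linarith
      have hf1 : f = 1 := by nlinarith
      have he0 : e = 0 := by linarith
      rw [← hxp', he0, hf1]; simp
    · exact absurd (sub_eq_zero.mp h') (Ne.symm hpq)
  · have he1 : e = 1 := by linarith
    have hpp' : p' = p := by rw [← hxp', h1, he1]; simp
    rcases mul_eq_zero.mp hck with h2 | h2
    · refine Or.inl ⟨hpp'.symm, ?_⟩
      have key3 : (1 - d*k) • (q - p) = (0:Pt) := by
        have hrw : q = b • p + d • (g • p + k • q) := by
          conv_lhs => rw [← hxq]
          rw [hxq', hpp']
        have h3 : (1 - d*k) • (q - p) =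
            (q - (b • p + d • (g • p + k • q))) - (b + d*g + d*k - 1) • p := by
          match_scalars
          all_goals try ring1
          all_goals linear_combination (2*d)*hgk + 2*hbd
        rw [h3, ← hrw]
        have h4 : b + d*g + d*k - 1 = 0 := by nlinarith
        rw [h4]; simp
      rcases smul_eq_zero.mp key3 with h' | h'
      · have hdk : d*k = 1 := by linarith
        have hk1 : k = 1 := by nlinarith
        have hg0 : g = 0 := by linarith
        rw [← hxq', hg0, hk1]; simp
      · exact absurd (sub_eq_zero.mp h') (Ne.symm hpq)
    · have hg1 : g = 1 := by linarith
      have hq'p : q' = p := by rw [← hxq', h2, hg1]; simp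
      exfalso
      apply hpq
      have hqq : q ∈ segment ℝ p' q' := h ▸ right_mem_segment ℝ p q
      rw [hpp', hq'p, segment_same] at hqq
      exact (Set.mem_singleton_iff.mp hqq).symm

lemma collinear_segment' (p q : Pt) : Collinear ℝ (segment ℝ p q) := by
  rw [collinear_iff_exists_forall_eq_smul_vadd]
  refine ⟨p, q - p, fun x hx => ?_⟩
  obtain ⟨a, c, _, _, hac, hx⟩ := hx
  refine ⟨c, ?_⟩
  rw [← hx, vadd_eq_add]
  match_scalars <;> linarith

lemma triangle_not_sub_segment {T : Triangle} (hT : T.Nondeg) (p q : Pt) :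
    ¬ (∀ k, T.v k ∈ segment ℝ p q) := by
  intro h
  have hcol : Collinear ℝ (Set.range T.v) :=
    (collinear_segment' p q).subset (Set.range_subset_iff.mpr h)
  exact (affineIndependent_iff_not_collinear.mp hT) hcol

end Aux

section Aux2

/-- letter coding: which child of a triangle each letter selects -/
def code (l : ZMod 6) : Fin 3 × Fin 3 :=
  if l = 0 then (0,1) else if l = 1 then (0,2) else if l = 2 then (2,0)
  else if l = 3 then (2,1) else if l = 4 then (1,2) else (1,0)

def thd (i j : Fin 3) : Fin 3 := ⟨(6 - (i:ℕ) - (j:ℕ)) % 3, Nat.mod_lt _ (by norm_num)⟩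

lemma code_ne : ∀ l : ZMod 6, (code l).1 ≠ (code l).2 := by decide

lemma code_inj : ∀ l l' : ZMod 6, code l = code l' → l = l' := by decide

lemma thd_ne : ∀ i j : Fin 3, i ≠ j → thd i j ≠ i ∧ thd i j ≠ j := by decide

lemma fin3_cases : ∀ i j k : Fin 3, i ≠ j → k = i ∨ k = j ∨ k = thd i j := by decide

lemma code_surj : ∀ i j : Fin 3, i ≠ j → ∃ l : ZMod 6, code l = (i, j) := by decide

noncomputable def cellW : (n : ℕ) → Triangle → Wrd n → Triangle
  | 0, S, _ => S
  | n+1, S, x => cellW n (S.child (code (x 0)).1 (code (x 0)).2) (Fin.tail x)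

def AllowedW : (n : ℕ) → Fin 3 → Fin 3 → Wrd n → Prop
  | 0, _, _, _ => True
  | n+1, i, j, x => (code (x 0) = (i,j) ∨ code (x 0) = (j,i)) ∧ AllowedW n 0 1 (Fin.tail x)

noncomputable def descW : (n : ℕ) → Pt × Pt → Fin 3 → Fin 3 → Wrd n → Pt × Pt
  | 0, pq, _, _, _ => pq
  | n+1, pq, i, j, x =>
      if code (x 0) = (i, j) then descW n (pq.1, (2:ℝ)⁻¹ • (pq.1 + pq.2)) 0 1 (Fin.tail x)
      else descW n (pq.2, (2:ℝ)⁻¹ • (pq.1 + pq.2)) 0 1 (Fin.tail x)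

/-- indices (in both children) of the side shared by children `l` and `l+1` -/
def sIdx (l : ZMod 6) : Fin 3 × Fin 3 :=
  if l = 0 ∨ l = 2 ∨ l = 4 then ((0:Fin 3),(2:Fin 3)) else (1,2)

lemma even_zmod6 : ∀ l : ZMod 6, Even l ↔ (l = 0 ∨ l = 2 ∨ l = 4) := by
  intro l
  constructor
  · rintro ⟨r, rfl⟩; revert r; decide
  · rintro (rfl | rfl | rfl)
    exacts [⟨0, by decide⟩, ⟨1, by decide⟩, ⟨2, by decide⟩]

/-- the non-barycenter endpoint of the side shared by children `l` and `l+1` -/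
noncomputable def sharedPt (S : Triangle) (l : ZMod 6) : Pt :=
  if l = 0 then S.v 0 else if l = 1 then (2:ℝ)⁻¹ • (S.v 0 + S.v 2)
  else if l = 2 then S.v 2 else if l = 3 then (2:ℝ)⁻¹ • (S.v 1 + S.v 2)
  else if l = 4 then S.v 1 else (2:ℝ)⁻¹ • (S.v 0 + S.v 1)

/-- order pattern satisfied by the barycentric coordinates of every point of child `l` -/
def OrdC (S : Triangle) (hS : S.Nondeg) (l : ZMod 6) (z : Pt) : Prop :=
  crd S hS (code l).2 z ≤ crd S hS (code l).1 z ∧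
  crd S hS (thd (code l).1 (code l).2) z ≤ crd S hS (code l).2 z ∧
  0 ≤ crd S hS (thd (code l).1 (code l).2) z

lemma zmod6_cases : ∀ l : ZMod 6, l = 0 ∨ l = 1 ∨ l = 2 ∨ l = 3 ∨ l = 4 ∨ l = 5 := by decide

lemma code_0 : code 0 = (0,1) := by decide
lemma code_1 : code 1 = (0,2) := by decide
lemma code_2 : code 2 = (2,0) := by decide
lemma code_3 : code 3 = (2,1) := by decide
lemma code_4 : code 4 = (1,2) := by decide
lemma code_5 : code 5 = (1,0) := by decide
lemma thd_01 : thd 0 1 = 2 := by decide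
lemma thd_02 : thd 0 2 = 1 := by decide
lemma thd_20 : thd 2 0 = 1 := by decide
lemma thd_21 : thd 2 1 = 0 := by decide
lemma thd_12 : thd 1 2 = 0 := by decide
lemma thd_10 : thd 1 0 = 2 := by decide
lemma sIdx_0 : sIdx 0 = (0,2) := by decide
lemma sIdx_1 : sIdx 1 = (1,2) := by decide
lemma sIdx_2 : sIdx 2 = (0,2) := by decide
lemma sIdx_3 : sIdx 3 = (1,2) := by decide
lemma sIdx_4 : sIdx 4 = (0,2) := by decide
lemma sIdx_5 : sIdx 5 = (1,2) := by decide

lemma sharedPt_c0 (S : Triangle) : sharedPt S 0 = S.v 0 := by rw [sharedPt, if_pos rfl]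
lemma sharedPt_c1 (S : Triangle) : sharedPt S 1 = (2:ℝ)⁻¹ • (S.v 0 + S.v 2) := by
  rw [sharedPt, if_neg (by decide), if_pos rfl]
lemma sharedPt_c2 (S : Triangle) : sharedPt S 2 = S.v 2 := by
  rw [sharedPt, if_neg (by decide), if_neg (by decide), if_pos rfl]
lemma sharedPt_c3 (S : Triangle) : sharedPt S 3 = (2:ℝ)⁻¹ • (S.v 1 + S.v 2) := by
  rw [sharedPt, if_neg (by decide), if_neg (by decide), if_neg (by decide), if_pos rfl]
lemma sharedPt_c4 (S : Triangle) : sharedPt S 4 = S.v 1 := by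
  rw [sharedPt, if_neg (by decide), if_neg (by decide), if_neg (by decide),
    if_neg (by decide), if_pos rfl]
lemma sharedPt_c5 (S : Triangle) : sharedPt S 5 = (2:ℝ)⁻¹ • (S.v 0 + S.v 1) := by
  rw [sharedPt, if_neg (by decide), if_neg (by decide), if_neg (by decide),
    if_neg (by decide), if_neg (by decide)]

lemma crd_v_nonneg {S : Triangle} (hS : S.Nondeg) (t k : Fin 3) : 0 ≤ crd S hS t (S.v k) := by
  rw [crd_vertex]; split <;> norm_num

lemma child_nondeg {S : Triangle} (hS : S.Nondeg) {i j : Fin 3} (hij : i ≠ j) :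
    (S.child i j).Nondeg := by
  set k := thd i j with hk
  obtain ⟨hki, hkj⟩ := thd_ne i j hij
  rw [Triangle.Nondeg, affineIndependent_iff_not_collinear]
  intro hcol
  rw [collinear_iff_of_mem (Set.mem_range_self 0)] at hcol
  obtain ⟨vv, hvv⟩ := hcol
  obtain ⟨t1, ht1⟩ := hvv _ (Set.mem_range_self 1)
  obtain ⟨t2, ht2⟩ := hvv _ (Set.mem_range_self 2)
  rw [child_v1, child_v0] at ht1
  rw [child_v2, child_v0] at ht2
  -- apply crd S hS j and crd S hS k
  have e1 := congrArg (crd S hS j) ht1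
  have e2 := congrArg (crd S hS j) ht2
  have e3 := congrArg (crd S hS k) ht1
  have e4 := congrArg (crd S hS k) ht2
  rw [crd_mid, AffineMap.map_vadd, map_smul, crd_ne (Ne.symm hij), crd_self] at e1
  rw [crd_bary, AffineMap.map_vadd, map_smul, crd_ne (Ne.symm hij)] at e2
  rw [crd_mid, AffineMap.map_vadd, map_smul, crd_ne hki, crd_ne hkj] at e3
  rw [crd_bary, AffineMap.map_vadd, map_smul, crd_ne hki] at e4
  simp only [vadd_eq_add, smul_eq_mul] at e1 e2 e3 e4
  -- e1 : (0+1)/2 = t1 * L_j + 1 ;  e2 : 1/3 = t2 * L_j + 1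
  -- e3 : (0+0)/2 = t1 * L_k + 0 ;  e4 : 1/3 = t2 * L_k + 0
  set Lj := (crd S hS j).linear vv
  set Lk := (crd S hS k).linear vv
  have h1 : t1 * Lj = 1/2 := by linarith
  have h2 : t2 * Lj = 1/3 := by linarith
  have h3 : t1 * Lk = 0 := by linarith
  have h4 : t2 * Lk = 1/3 := by linarith
  have ht1ne : t1 ≠ 0 := by
    intro h; rw [h, zero_mul] at h1; norm_num at h1
  have hLk : Lk = 0 := by
    rcases mul_eq_zero.mp h3 with h | h
    · exact absurd h ht1ne
    · exact h
  rw [hLk, mul_zero] at h4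
  norm_num at h4

lemma cell_nondeg : ∀ (n : ℕ) (S : Triangle), S.Nondeg → ∀ x : Wrd n, (cellW n S x).Nondeg := by
  intro n
  induction n with
  | zero => intro S hS x; exact hS
  | succ n IH =>
      intro S hS x
      exact IH _ (child_nondeg hS (code_ne (x 0))) (Fin.tail x)

lemma vertex_crd_nonneg : ∀ (n : ℕ) (S : Triangle) (hS : S.Nondeg) (x : Wrd n) (k t : Fin 3),
    0 ≤ crd S hS t ((cellW n S x).v k) := by
  intro n
  induction n with
  | zero => intro S hS x k t; exact crd_v_nonneg hS t k
  | succ n IH =>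
      intro S hS x k t
      have hS' := child_nondeg hS (code_ne (x 0))
      set S' := S.child (code (x 0)).1 (code (x 0)).2 with hS'def
      have hz : (cellW (n+1) S x).v k = (cellW n S' (Fin.tail x)).v k := rfl
      rw [hz, crd_transfer hS' (crd S hS t)]
      have g0 := IH S' hS' (Fin.tail x) k 0
      have g1 := IH S' hS' (Fin.tail x) k 1
      have g2 := IH S' hS' (Fin.tail x) k 2
      have c0 : 0 ≤ crd S hS t (S'.v 0) := crd_v_nonneg hS t _
      have c1 : 0 ≤ crd S hS t (S'.v 1) := by
        rw [child_v1, crd_mid]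
        have := crd_v_nonneg hS t (code (x 0)).1
        have := crd_v_nonneg hS t (code (x 0)).2
        linarith
      have c2 : 0 ≤ crd S hS t (S'.v 2) := by rw [child_v2, crd_bary]; norm_num
      have := mul_nonneg g0 c0
      have := mul_nonneg g1 c1
      have := mul_nonneg g2 c2
      linarith

lemma vertex_ordc : ∀ (n : ℕ) (S : Triangle) (hS : S.Nondeg) (x : Wrd (n+1)) (k : Fin 3),
    OrdC S hS (x 0) ((cellW (n+1) S x).v k) := by
  intro n S hS x k
  have hij := code_ne (x 0)
  obtain ⟨hki, hkj⟩ := thd_ne _ _ hij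
  have hS' := child_nondeg hS hij
  set i' := (code (x 0)).1
  set j' := (code (x 0)).2
  set S' := S.child i' j' with hS'def
  set z := (cellW (n+1) S x).v k with hzdef
  have hz : z = (cellW n S' (Fin.tail x)).v k := rfl
  have g0 : 0 ≤ crd S' hS' 0 z := by rw [hz]; exact vertex_crd_nonneg n S' hS' _ k 0
  have g1 : 0 ≤ crd S' hS' 1 z := by rw [hz]; exact vertex_crd_nonneg n S' hS' _ k 1
  have g2 : 0 ≤ crd S' hS' 2 z := by rw [hz]; exact vertex_crd_nonneg n S' hS' _ k 2
  have e1 := crd_transfer hS' (crd S hS i') z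
  have e2 := crd_transfer hS' (crd S hS j') z
  have e3 := crd_transfer hS' (crd S hS (thd i' j')) z
  rw [child_v0, child_v1, child_v2, crd_mid, crd_bary, crd_self,
    crd_ne (hT := hS) hij] at e1
  rw [child_v0, child_v1, child_v2, crd_mid, crd_bary, crd_ne (Ne.symm hij),
    crd_self (hT := hS)] at e2
  rw [child_v0, child_v1, child_v2, crd_mid, crd_bary, crd_ne hki, crd_ne hkj] at e3
  refine ⟨by rw [e1, e2]; nlinarith, by rw [e2, e3]; nlinarith, by rw [e3]; nlinarith⟩

lemma eq_bary_of_crd {S : Triangle} (hS : S.Nondeg) {z : Pt}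
    (h0 : crd S hS 0 z = crd S hS 1 z) (h1 : crd S hS 1 z = crd S hS 2 z) : z = S.bary := by
  have hsum := sum_crd (hT := hS) z
  conv_lhs => rw [recon hS z]
  rw [Triangle.bary]
  match_scalars <;> linarith

lemma eq_vertex_of_crd {S : Triangle} (hS : S.Nondeg) {z : Pt} {i : Fin 3}
    (h : ∀ t, t ≠ i → crd S hS t z = 0) : z = S.v i := by
  have hsum := sum_crd (hT := hS) z
  conv_lhs => rw [recon hS z]
  fin_cases i
  · have h1 := h 1 (by decide); have h2 := h 2 (by decide)
    have h0 : crd S hS 0 z = 1 := by linarith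
    rw [h0, h1, h2]; simp
  · have h1 := h 0 (by decide); have h2 := h 2 (by decide)
    have h0 : crd S hS 1 z = 1 := by linarith
    rw [h0, h1, h2]; simp
  · have h1 := h 0 (by decide); have h2 := h 1 (by decide)
    have h0 : crd S hS 2 z = 1 := by linarith
    rw [h0, h1, h2]; simp

lemma int_nonconsec {S : Triangle} (hS : S.Nondeg) {l l' : ZMod 6} (h1 : l ≠ l')
    (h2 : l' ≠ l + 1) (h3 : l ≠ l' + 1) {z : Pt} (hz : OrdC S hS l z) (hz' : OrdC S hS l' z) :
    z = S.bary := by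
  have hsum := sum_crd (hT := hS) z
  rcases zmod6_cases l with rfl|rfl|rfl|rfl|rfl|rfl <;>
    rcases zmod6_cases l' with rfl|rfl|rfl|rfl|rfl|rfl <;>
    first
      | exact absurd rfl h1
      | exact absurd (by decide) h2
      | exact absurd (by decide) h3
      | (simp only [OrdC, code_0, code_1, code_2, code_3, code_4, code_5, thd_01, thd_02,
          thd_20, thd_21, thd_12, thd_10] at hz hz'
         obtain ⟨a1, a2, a3⟩ := hz
         obtain ⟨b1, b2, b3⟩ := hz'
         exact eq_bary_of_crd hS (by linarith) (by linarith))

lemma int_consec {S : Triangle} (hS : S.Nondeg) (l : ZMod 6) {z : Pt}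
    (hz : OrdC S hS l z) (hz' : OrdC S hS (l+1) z) : z ∈ segment ℝ (sharedPt S l) S.bary := by
  have hsum := sum_crd (hT := hS) z
  rcases zmod6_cases l with rfl|rfl|rfl|rfl|rfl|rfl <;>
    simp only [OrdC, show (0:ZMod 6)+1 = 1 from by decide, show (1:ZMod 6)+1 = 2 from by decide,
      show (2:ZMod 6)+1 = 3 from by decide, show (3:ZMod 6)+1 = 4 from by decide,
      show (4:ZMod 6)+1 = 5 from by decide, show (5:ZMod 6)+1 = 0 from by decide,
      code_0, code_1, code_2, code_3, code_4, code_5, thd_01, thd_02, thd_20, thd_21,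
      thd_12, thd_10] at hz hz' <;>
    obtain ⟨a1, a2, a3⟩ := hz <;> obtain ⟨b1, b2, b3⟩ := hz'
  · rw [sharedPt_c0]
    exact mem_segment_of_combo (a := crd S hS 0 z - crd S hS 1 z) (c := 3 * crd S hS 1 z)
      (by linarith) (by linarith) (by linarith)
      (by conv_lhs => rw [recon hS z]
          rw [Triangle.bary]; match_scalars <;> linarith)
  · rw [sharedPt_c1]
    exact mem_segment_of_combo (a := 2*(crd S hS 0 z - crd S hS 1 z)) (c := 3 * crd S hS 1 z)
      (by linarith) (by linarith) (by linarith)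
      (by conv_lhs => rw [recon hS z]
          rw [Triangle.bary]; match_scalars <;> linarith)
  · rw [sharedPt_c2]
    exact mem_segment_of_combo (a := crd S hS 2 z - crd S hS 0 z) (c := 3 * crd S hS 0 z)
      (by linarith) (by linarith) (by linarith)
      (by conv_lhs => rw [recon hS z]
          rw [Triangle.bary]; match_scalars <;> linarith)
  · rw [sharedPt_c3]
    exact mem_segment_of_combo (a := 2*(crd S hS 1 z - crd S hS 0 z)) (c := 3 * crd S hS 0 z)
      (by linarith) (by linarith) (by linarith)
      (by conv_lhs => rw [recon hS z]
          rw [Triangle.bary]; match_scalars <;> linarith)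
  · rw [sharedPt_c4]
    exact mem_segment_of_combo (a := crd S hS 1 z - crd S hS 0 z) (c := 3 * crd S hS 0 z)
      (by linarith) (by linarith) (by linarith)
      (by conv_lhs => rw [recon hS z]
          rw [Triangle.bary]; match_scalars <;> linarith)
  · rw [sharedPt_c5]
    exact mem_segment_of_combo (a := 2*(crd S hS 0 z - crd S hS 2 z)) (c := 3 * crd S hS 2 z)
      (by linarith) (by linarith) (by linarith)
      (by conv_lhs => rw [recon hS z]
          rw [Triangle.bary]; match_scalars <;> linarith)

lemma sIdx_ne (l : ZMod 6) : (sIdx l).1 ≠ (sIdx l).2 := by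
  unfold sIdx; split <;> decide

lemma sharedPt_ne_bary {S : Triangle} (hS : S.Nondeg) (l : ZMod 6) :
    sharedPt S l ≠ S.bary := by
  rcases zmod6_cases l with rfl|rfl|rfl|rfl|rfl|rfl
  · rw [sharedPt_c0]; intro h
    have h2 := congrArg (crd S hS 0) h
    rw [crd_self, crd_bary] at h2; norm_num at h2
  · rw [sharedPt_c1]; intro h
    have h2 := congrArg (crd S hS 1) h
    rw [crd_mid, crd_ne (by decide), crd_ne (by decide), crd_bary] at h2; norm_num at h2
  · rw [sharedPt_c2]; intro h
    have h2 := congrArg (crd S hS 2) h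
    rw [crd_self, crd_bary] at h2; norm_num at h2
  · rw [sharedPt_c3]; intro h
    have h2 := congrArg (crd S hS 0) h
    rw [crd_mid, crd_ne (by decide), crd_ne (by decide), crd_bary] at h2; norm_num at h2
  · rw [sharedPt_c4]; intro h
    have h2 := congrArg (crd S hS 1) h
    rw [crd_self, crd_bary] at h2; norm_num at h2
  · rw [sharedPt_c5]; intro h
    have h2 := congrArg (crd S hS 2) h
    rw [crd_mid, crd_ne (by decide), crd_ne (by decide), crd_bary] at h2; norm_num at h2

lemma sharedPt_left (S : Triangle) (l : ZMod 6) :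
    (S.child (code l).1 (code l).2).v (sIdx l).1 = sharedPt S l ∧
    (S.child (code l).1 (code l).2).v (sIdx l).2 = S.bary := by
  rcases zmod6_cases l with rfl|rfl|rfl|rfl|rfl|rfl <;>
    simp only [code_0, code_1, code_2, code_3, code_4, code_5, sIdx_0, sIdx_1, sIdx_2,
      sIdx_3, sIdx_4, sIdx_5, sharedPt_c0, sharedPt_c1, sharedPt_c2, sharedPt_c3,
      sharedPt_c4, sharedPt_c5, child_v0, child_v1, child_v2] <;>
    constructor <;> first | trivial | module

lemma sharedPt_right (S : Triangle) (l : ZMod 6) :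
    (S.child (code (l+1)).1 (code (l+1)).2).v (sIdx l).1 = sharedPt S l ∧
    (S.child (code (l+1)).1 (code (l+1)).2).v (sIdx l).2 = S.bary := by
  rcases zmod6_cases l with rfl|rfl|rfl|rfl|rfl|rfl <;>
    simp only [show (0:ZMod 6)+1 = 1 from by decide, show (1:ZMod 6)+1 = 2 from by decide,
      show (2:ZMod 6)+1 = 3 from by decide, show (3:ZMod 6)+1 = 4 from by decide,
      show (4:ZMod 6)+1 = 5 from by decide, show (5:ZMod 6)+1 = 0 from by decide,
      code_0, code_1, code_2, code_3, code_4, code_5, sIdx_0, sIdx_1, sIdx_2,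
      sIdx_3, sIdx_4, sIdx_5, sharedPt_c0, sharedPt_c1, sharedPt_c2, sharedPt_c3,
      sharedPt_c4, sharedPt_c5, child_v0, child_v1, child_v2] <;>
    constructor <;> first | trivial | module

lemma ne_mid_left {p q : Pt} (h : p ≠ q) : p ≠ (2:ℝ)⁻¹ • (p + q) := by
  intro he
  apply h
  have h0 : (2:ℝ)⁻¹ • (p - q) = p - (2:ℝ)⁻¹ • (p + q) := by module
  rw [← he, sub_self] at h0
  rcases smul_eq_zero.mp h0 with h' | h'
  · norm_num at h'
  · exact sub_eq_zero.mp h'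

lemma ne_mid_right {p q : Pt} (h : p ≠ q) : q ≠ (2:ℝ)⁻¹ • (p + q) := by
  intro he
  apply h
  have h0 : (2:ℝ)⁻¹ • (q - p) = q - (2:ℝ)⁻¹ • (p + q) := by module
  rw [← he, sub_self] at h0
  rcases smul_eq_zero.mp h0 with h' | h'
  · norm_num at h'
  · exact (sub_eq_zero.mp h').symm

lemma descW_succ (n : ℕ) (pq : Pt × Pt) (i j : Fin 3) (x : Wrd (n+1)) :
    descW (n+1) pq i j x =
      if code (x 0) = (i, j) then descW n (pq.1, (2:ℝ)⁻¹ • (pq.1 + pq.2)) 0 1 (Fin.tail x)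
      else descW n (pq.2, (2:ℝ)⁻¹ • (pq.1 + pq.2)) 0 1 (Fin.tail x) := rfl

lemma cellW_succ (n : ℕ) (S : Triangle) (x : Wrd (n+1)) :
    cellW (n+1) S x = cellW n (S.child (code (x 0)).1 (code (x 0)).2) (Fin.tail x) := rfl

lemma allowedW_succ (n : ℕ) (i j : Fin 3) (x : Wrd (n+1)) :
    AllowedW (n+1) i j x ↔
      (code (x 0) = (i,j) ∨ code (x 0) = (j,i)) ∧ AllowedW n 0 1 (Fin.tail x) := Iff.rfl

lemma fin3_pairs : ∀ i j i' j' : Fin 3, i ≠ j → i' ≠ j' → (i',j') ≠ (i,j) → (i',j') ≠ (j,i) →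
    (i' = thd i j ∨ j' = thd i j) := by decide

lemma desc_mem : ∀ (n : ℕ) (p q : Pt), p ≠ q → ∀ (i j : Fin 3) (x : Wrd n),
    (descW n (p,q) i j x).1 ∈ segment ℝ p q ∧ (descW n (p,q) i j x).2 ∈ segment ℝ p q ∧
    (descW n (p,q) i j x).1 ≠ (descW n (p,q) i j x).2 := by
  intro n
  induction n with
  | zero =>
      intro p q hpq i j x
      exact ⟨left_mem_segment ℝ p q, right_mem_segment ℝ p q, hpq⟩
  | succ n IH =>
      intro p q hpq i j x
      rw [descW_succ]
      by_cases hc : code (x 0) = (i, j)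
      · rw [if_pos hc]
        obtain ⟨m1, m2, m3⟩ := IH p ((2:ℝ)⁻¹ • (p + q)) (ne_mid_left hpq) 0 1 (Fin.tail x)
        exact ⟨seg_sub_left p q m1, seg_sub_left p q m2, m3⟩
      · rw [if_neg hc]
        obtain ⟨m1, m2, m3⟩ := IH q ((2:ℝ)⁻¹ • (p + q)) (ne_mid_right hpq) 0 1 (Fin.tail x)
        exact ⟨seg_sub_right p q m1, seg_sub_right p q m2, m3⟩

lemma desc_inj : ∀ (n : ℕ) (p q : Pt), p ≠ q → ∀ (i j : Fin 3), i ≠ j → ∀ x y : Wrd n,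
    AllowedW n i j x → AllowedW n i j y →
    (((descW n (p,q) i j x).1 = (descW n (p,q) i j y).1 ∧
      (descW n (p,q) i j x).2 = (descW n (p,q) i j y).2) ∨
     ((descW n (p,q) i j x).1 = (descW n (p,q) i j y).2 ∧
      (descW n (p,q) i j x).2 = (descW n (p,q) i j y).1)) → x = y := by
  intro n
  induction n with
  | zero => intro _ _ _ _ _ _ x y _ _ _; funext k; exact k.elim0
  | succ n IH =>
      intro p q hpq i j hij x y hx hy hd
      obtain ⟨hxh, hxt⟩ := (allowedW_succ n i j x).mp hx
      obtain ⟨hyh, hyt⟩ := (allowedW_succ n i j y).mp hy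
      have hpairne : ((i,j) : Fin 3 × Fin 3) ≠ (j,i) := by
        intro h; exact hij (congrArg Prod.fst h)
      rw [descW_succ, descW_succ] at hd
      have hmix : ∀ x' y' : Wrd n,
          (((descW n (p, (2:ℝ)⁻¹ • (p+q)) 0 1 x').1 = (descW n (q, (2:ℝ)⁻¹ • (p+q)) 0 1 y').1 ∧
            (descW n (p, (2:ℝ)⁻¹ • (p+q)) 0 1 x').2 = (descW n (q, (2:ℝ)⁻¹ • (p+q)) 0 1 y').2) ∨
           ((descW n (p, (2:ℝ)⁻¹ • (p+q)) 0 1 x').1 = (descW n (q, (2:ℝ)⁻¹ • (p+q)) 0 1 y').2 ∧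
            (descW n (p, (2:ℝ)⁻¹ • (p+q)) 0 1 x').2 = (descW n (q, (2:ℝ)⁻¹ • (p+q)) 0 1 y').1)) →
          False := by
        intro x' y' hd'
        obtain ⟨a1, a2, a3⟩ := desc_mem n p ((2:ℝ)⁻¹ • (p+q)) (ne_mid_left hpq) 0 1 x'
        obtain ⟨b1, b2, b3⟩ := desc_mem n q ((2:ℝ)⁻¹ • (p+q)) (ne_mid_right hpq) 0 1 y'
        rcases hd' with ⟨e1, e2⟩ | ⟨e1, e2⟩
        · apply a3
          rw [mid_int rfl hpq a1 (e1 ▸ b1), mid_int rfl hpq a2 (e2 ▸ b2)]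
        · apply a3
          rw [mid_int rfl hpq a1 (e1 ▸ b2), mid_int rfl hpq a2 (e2 ▸ b1)]
      rcases hxh with hx1 | hx1 <;> rcases hyh with hy1 | hy1
      · rw [if_pos hx1, if_pos hy1] at hd
        have htl := IH p ((2:ℝ)⁻¹ • (p+q)) (ne_mid_left hpq) 0 1 (by decide)
          (Fin.tail x) (Fin.tail y) hxt hyt hd
        have hhd : x 0 = y 0 := code_inj _ _ (hx1.trans hy1.symm)
        rw [← Fin.cons_self_tail x, ← Fin.cons_self_tail y, hhd, htl]
      · rw [if_pos hx1, if_neg (by rw [hy1]; exact Ne.symm hpairne)] at hd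
        exact absurd hd (by intro h; exact hmix _ _ h)
      · rw [if_neg (by rw [hx1]; exact Ne.symm hpairne), if_pos hy1] at hd
        exfalso
        apply hmix (Fin.tail y) (Fin.tail x)
        rcases hd with ⟨e1, e2⟩ | ⟨e1, e2⟩
        · exact Or.inl ⟨e1.symm, e2.symm⟩
        · exact Or.inr ⟨e2.symm, e1.symm⟩
      · rw [if_neg (by rw [hx1]; exact Ne.symm hpairne),
          if_neg (by rw [hy1]; exact Ne.symm hpairne)] at hd
        have htl := IH q ((2:ℝ)⁻¹ • (p+q)) (ne_mid_right hpq) 0 1 (by decide)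
          (Fin.tail x) (Fin.tail y) hxt hyt hd
        have hhd : x 0 = y 0 := code_inj _ _ (hx1.trans hy1.symm)
        rw [← Fin.cons_self_tail x, ← Fin.cons_self_tail y, hhd, htl]

lemma side_track : ∀ (n : ℕ) (S : Triangle) (hS : S.Nondeg) (i j : Fin 3), i ≠ j →
    ∀ x : Wrd n,
    (AllowedW n i j x →
      ((∃ k, (cellW n S x).v k = (descW n (S.v i, S.v j) i j x).1) ∧
       (∃ k, (cellW n S x).v k = (descW n (S.v i, S.v j) i j x).2) ∧
       ∀ k, (cellW n S x).v k ∈ segment ℝ (S.v i) (S.v j) →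
         (cellW n S x).v k = (descW n (S.v i, S.v j) i j x).1 ∨
         (cellW n S x).v k = (descW n (S.v i, S.v j) i j x).2)) ∧
    (¬ AllowedW n i j x →
      ∃ z, ∀ k, (cellW n S x).v k ∈ segment ℝ (S.v i) (S.v j) → (cellW n S x).v k = z) := by
  intro n
  induction n with
  | zero =>
      intro S hS i j hij x
      constructor
      · intro _
        refine ⟨⟨i, rfl⟩, ⟨j, rfl⟩, ?_⟩
        intro k hk
        obtain ⟨hki, hkj⟩ := thd_ne i j hij
        rcases fin3_cases i j k hij with rfl | rfl | hk3
        · exact Or.inl rfl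
        · exact Or.inr rfl
        · exfalso
          obtain ⟨a, c, ha, hc, hac, hxc⟩ := hk
          have h2 := congrArg (crd S hS (thd i j)) hxc
          rw [combo2 _ hac, crd_ne hki, crd_ne hkj] at h2
          rw [hk3, show cellW 0 S x = S from rfl, crd_self] at h2
          norm_num at h2
      · intro hna; exact absurd trivial hna
  | succ n IH =>
      intro S hS i j hij x
      have hij' := code_ne (x 0)
      have hS' := child_nondeg hS hij'
      by_cases hc1 : code (x 0) = (i, j)
      · -- child aligned with the side, same orientation
        have hv0 : (S.child (code (x 0)).1 (code (x 0)).2).v 0 = S.v i := by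
          rw [child_v0, hc1]
        have hv1 : (S.child (code (x 0)).1 (code (x 0)).2).v 1 =
            (2:ℝ)⁻¹ • (S.v i + S.v j) := by rw [child_v1, hc1]
        have hsub : segment ℝ ((S.child (code (x 0)).1 (code (x 0)).2).v 0)
            ((S.child (code (x 0)).1 (code (x 0)).2).v 1) ⊆ segment ℝ (S.v i) (S.v j) := by
          rw [hv0, hv1]; exact seg_sub_left _ _
        have hsup : ∀ k, (cellW (n+1) S x).v k ∈ segment ℝ (S.v i) (S.v j) →
            (cellW (n+1) S x).v k ∈ segment ℝ ((S.child (code (x 0)).1 (code (x 0)).2).v 0)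
              ((S.child (code (x 0)).1 (code (x 0)).2).v 1) := by
          intro k hk
          obtain ⟨a, c, ha, hc, hac, hxc⟩ := hk
          have o1 : crd S hS j ((cellW (n+1) S x).v k) ≤
              crd S hS i ((cellW (n+1) S x).v k) := by
            have h := (vertex_ordc n S hS x k).1
            rw [hc1] at h
            exact h
          have hcrdi : crd S hS i ((cellW (n+1) S x).v k) = a := by
            rw [← hxc, combo2 _ hac, crd_self, crd_ne hij]; ring
          have hcrdj : crd S hS j ((cellW (n+1) S x).v k) = c := by
            rw [← hxc, combo2 _ hac, crd_ne (Ne.symm hij), crd_self]; ring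
          rw [hcrdi, hcrdj] at o1
          rw [hv0, hv1]
          exact mem_segment_of_combo (a := a - c) (c := 2*c) (by linarith) (by linarith)
            (by linarith) (by rw [← hxc]; module)
        have hdesc : descW (n+1) (S.v i, S.v j) i j x =
            descW n ((S.child (code (x 0)).1 (code (x 0)).2).v 0,
              (S.child (code (x 0)).1 (code (x 0)).2).v 1) 0 1 (Fin.tail x) := by
          rw [descW_succ, if_pos hc1, hv0, hv1]
        have IH' := IH (S.child (code (x 0)).1 (code (x 0)).2) hS' 0 1 (by decide) (Fin.tail x)
        rw [cellW_succ, hdesc]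
        constructor
        · intro hall
          obtain ⟨-, ht⟩ := (allowedW_succ n i j x).mp hall
          obtain ⟨E1, E2, E3⟩ := IH'.1 ht
          exact ⟨E1, E2, fun k hk => E3 k (hsup k hk)⟩
        · intro hna
          have hnt : ¬ AllowedW n 0 1 (Fin.tail x) := by
            intro ht; exact hna ((allowedW_succ n i j x).mpr ⟨Or.inl hc1, ht⟩)
          obtain ⟨z, hz⟩ := IH'.2 hnt
          exact ⟨z, fun k hk => hz k (hsup k hk)⟩
      · by_cases hc2 : code (x 0) = (j, i)
        · -- child aligned with the side, reversed orientation
          have hv0 : (S.child (code (x 0)).1 (code (x 0)).2).v 0 = S.v j := by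
            rw [child_v0, hc2]
          have hv1 : (S.child (code (x 0)).1 (code (x 0)).2).v 1 =
              (2:ℝ)⁻¹ • (S.v i + S.v j) := by
            rw [child_v1, hc2]
            rw [add_comm (S.v j) (S.v i)]
          have hsub : segment ℝ ((S.child (code (x 0)).1 (code (x 0)).2).v 0)
              ((S.child (code (x 0)).1 (code (x 0)).2).v 1) ⊆ segment ℝ (S.v i) (S.v j) := by
            rw [hv0, hv1]; exact seg_sub_right _ _
          have hsup : ∀ k, (cellW (n+1) S x).v k ∈ segment ℝ (S.v i) (S.v j) →
              (cellW (n+1) S x).v k ∈ segment ℝ ((S.child (code (x 0)).1 (code (x 0)).2).v 0)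
                ((S.child (code (x 0)).1 (code (x 0)).2).v 1) := by
            intro k hk
            obtain ⟨a, c, ha, hc, hac, hxc⟩ := hk
            have o1 : crd S hS i ((cellW (n+1) S x).v k) ≤
                crd S hS j ((cellW (n+1) S x).v k) := by
              have h := (vertex_ordc n S hS x k).1
              rw [hc2] at h
              exact h
            have hcrdi : crd S hS i ((cellW (n+1) S x).v k) = a := by
              rw [← hxc, combo2 _ hac, crd_self, crd_ne hij]; ring
            have hcrdj : crd S hS j ((cellW (n+1) S x).v k) = c := by
              rw [← hxc, combo2 _ hac, crd_ne (Ne.symm hij), crd_self]; ring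
            rw [hcrdi, hcrdj] at o1
            rw [hv0, hv1]
            exact mem_segment_of_combo (a := c - a) (c := 2*a) (by linarith) (by linarith)
              (by linarith) (by rw [← hxc]; module)
          have hdesc : descW (n+1) (S.v i, S.v j) i j x =
              descW n ((S.child (code (x 0)).1 (code (x 0)).2).v 0,
                (S.child (code (x 0)).1 (code (x 0)).2).v 1) 0 1 (Fin.tail x) := by
            have hne : code (x 0) ≠ (i, j) := hc1
            rw [descW_succ, if_neg hne, hv0, hv1]
          have IH' := IH (S.child (code (x 0)).1 (code (x 0)).2) hS' 0 1 (by decide) (Fin.tail x)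
          rw [cellW_succ, hdesc]
          constructor
          · intro hall
            obtain ⟨-, ht⟩ := (allowedW_succ n i j x).mp hall
            obtain ⟨E1, E2, E3⟩ := IH'.1 ht
            exact ⟨E1, E2, fun k hk => E3 k (hsup k hk)⟩
          · intro hna
            have hnt : ¬ AllowedW n 0 1 (Fin.tail x) := by
              intro ht; exact hna ((allowedW_succ n i j x).mpr ⟨Or.inr hc2, ht⟩)
            obtain ⟨z, hz⟩ := IH'.2 hnt
            exact ⟨z, fun k hk => hz k (hsup k hk)⟩
        · -- child not on the side
          have hnall : ¬ AllowedW (n+1) i j x := by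
            intro h
            rcases ((allowedW_succ n i j x).mp h).1 with h' | h'
            · exact hc1 h'
            · exact hc2 h'
          refine ⟨fun h => absurd h hnall, fun _ => ?_⟩
          obtain ⟨hki, hkj⟩ := thd_ne i j hij
          have hcn1 : ((code (x 0)).1, (code (x 0)).2) ≠ (i, j) := by
            rw [Prod.mk.eta]; exact hc1
          have hcn2 : ((code (x 0)).1, (code (x 0)).2) ≠ (j, i) := by
            rw [Prod.mk.eta]; exact hc2
          have hzero : ∀ k, (cellW (n+1) S x).v k ∈ segment ℝ (S.v i) (S.v j) →
              crd S hS (thd i j) ((cellW (n+1) S x).v k) = 0 := by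
            intro k hk
            obtain ⟨a, c, ha, hc, hac, hxc⟩ := hk
            rw [← hxc, combo2 _ hac, crd_ne hki, crd_ne hkj]; ring
          rcases fin3_pairs i j (code (x 0)).1 (code (x 0)).2 hij hij' hcn1 hcn2 with hth | hth
          · -- first child index is the off vertex: no vertex on the side at all
            refine ⟨S.v 0, fun k hk => ?_⟩
            exfalso
            obtain ⟨o1, o2, o3⟩ := vertex_ordc n S hS x k
            have hz0 := hzero k hk
            rw [← hth] at hz0
            have hj'0 : crd S hS (code (x 0)).2 ((cellW (n+1) S x).v k) = 0 := by linarith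
            have hth0 : crd S hS (thd (code (x 0)).1 (code (x 0)).2)
                ((cellW (n+1) S x).v k) = 0 := by linarith
            have hall0 : ∀ t, crd S hS t ((cellW (n+1) S x).v k) = 0 := by
              intro t
              rcases fin3_cases (code (x 0)).1 (code (x 0)).2 t hij' with rfl | rfl | rfl
              · linarith
              · exact hj'0
              · exact hth0
            have hsum := sum_crd (hT := hS) ((cellW (n+1) S x).v k)
            rw [hall0 0, hall0 1, hall0 2] at hsum
            norm_num at hsum
          · -- second child index is the off vertex: only possible vertex is S.v i'
            refine ⟨S.v (code (x 0)).1, fun k hk => ?_⟩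
            obtain ⟨o1, o2, o3⟩ := vertex_ordc n S hS x k
            have hz0 := hzero k hk
            rw [← hth] at hz0
            apply eq_vertex_of_crd hS
            intro t hti
            rcases fin3_cases (code (x 0)).1 (code (x 0)).2 t hij' with rfl | rfl | rfl
            · exact absurd rfl hti
            · exact hz0
            · linarith

lemma adjacent_symm {s t : Triangle} (h : Adjacent s t) : Adjacent t s := by
  obtain ⟨hne, e, h1, h2⟩ := h
  exact ⟨hne.symm, e, h2, h1⟩

lemma adjacent_shared {s t : Triangle} (hs : s.Nondeg) (h : Adjacent s t) :
    ∃ k₁ k₂ m₁ m₂ : Fin 3, k₁ ≠ k₂ ∧ m₁ ≠ m₂ ∧ s.v k₁ = t.v m₁ ∧ s.v k₂ = t.v m₂ := by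
  obtain ⟨hne, e, ⟨k₁, k₂, hk, he1⟩, ⟨m₁, m₂, hm, he2⟩⟩ := h
  have hvne : s.v k₁ ≠ s.v k₂ := hs.injective.ne hk
  have hseq : segment ℝ (s.v k₁) (s.v k₂) = segment ℝ (t.v m₁) (t.v m₂) := by
    rw [← he1, ← he2]
  rcases segment_endpoints hvne hseq with ⟨e1, e2⟩ | ⟨e1, e2⟩
  · exact ⟨k₁, k₂, m₁, m₂, hk, hm, e1, e2⟩
  · exact ⟨k₁, k₂, m₂, m₁, hk, hm.symm, e1, e2⟩

lemma shared_adjacent {s t : Triangle} (hne : s ≠ t) {k₁ k₂ m₁ m₂ : Fin 3} (hk : k₁ ≠ k₂)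
    (hm : m₁ ≠ m₂) (h1 : s.v k₁ = t.v m₁) (h2 : s.v k₂ = t.v m₂) : Adjacent s t := by
  refine ⟨hne, segment ℝ (s.v k₁) (s.v k₂), ⟨k₁, k₂, hk, rfl⟩, ⟨m₁, m₂, hm, ?_⟩⟩
  rw [h1, h2]

lemma zmod6_no2 : ∀ a : ZMod 6, a ≠ a + 1 + 1 := by decide

lemma cross_consec (n : ℕ) (S : Triangle) (hS : S.Nondeg) (u w : Wrd (n+1))
    (hc : w 0 = u 0 + 1) :
    (cellW (n+1) S u ≠ cellW (n+1) S w) ∧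
    (Adjacent (cellW (n+1) S u) (cellW (n+1) S w) ↔
      (Fin.tail u = Fin.tail w ∧ AllowedW n (sIdx (u 0)).1 (sIdx (u 0)).2 (Fin.tail u))) := by
  have hndu := cell_nondeg (n+1) S hS u
  have hndw := cell_nondeg (n+1) S hS w
  have hOrdu : ∀ k, OrdC S hS (u 0) ((cellW (n+1) S u).v k) := fun k => vertex_ordc n S hS u k
  have hOrdw : ∀ k, OrdC S hS (u 0 + 1) ((cellW (n+1) S w).v k) := by
    intro k
    have h := vertex_ordc n S hS w k
    rwa [hc] at h
  have hPb : sharedPt S (u 0) ≠ S.bary := sharedPt_ne_bary hS (u 0)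
  have hsidx := sIdx_ne (u 0)
  have hA' : (S.child (code (u 0)).1 (code (u 0)).2).Nondeg := child_nondeg hS (code_ne _)
  have hB' : (S.child (code (u 0 + 1)).1 (code (u 0 + 1)).2).Nondeg :=
    child_nondeg hS (code_ne _)
  have hSl := sharedPt_left S (u 0)
  have hSr := sharedPt_right S (u 0)
  have hcw : cellW (n+1) S w =
      cellW n (S.child (code (u 0 + 1)).1 (code (u 0 + 1)).2) (Fin.tail w) := by
    rw [cellW_succ, hc]
  have hne : cellW (n+1) S u ≠ cellW (n+1) S w := by
    intro he
    apply triangle_not_sub_segment hndu (sharedPt S (u 0)) S.bary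
    intro k
    refine int_consec hS (u 0) (hOrdu k) ?_
    rw [show (cellW (n+1) S u).v k = (cellW (n+1) S w).v k by rw [he]]
    exact hOrdw k
  refine ⟨hne, ?_, ?_⟩
  · -- forward direction
    intro hadj
    obtain ⟨k₁, k₂, m₁, m₂, hk12, hm12, e1, e2⟩ := adjacent_shared hndu hadj
    have hz12 : (cellW (n+1) S u).v k₁ ≠ (cellW (n+1) S u).v k₂ := hndu.injective.ne hk12
    have hz1 : (cellW (n+1) S u).v k₁ ∈ segment ℝ (sharedPt S (u 0)) S.bary := by
      refine int_consec hS (u 0) (hOrdu k₁) ?_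
      rw [e1]; exact hOrdw m₁
    have hz2 : (cellW (n+1) S u).v k₂ ∈ segment ℝ (sharedPt S (u 0)) S.bary := by
      refine int_consec hS (u 0) (hOrdu k₂) ?_
      rw [e2]; exact hOrdw m₂
    have hstA := side_track n (S.child (code (u 0)).1 (code (u 0)).2) hA'
      (sIdx (u 0)).1 (sIdx (u 0)).2 hsidx (Fin.tail u)
    rw [hSl.1, hSl.2, ← cellW_succ] at hstA
    have hstB := side_track n (S.child (code (u 0 + 1)).1 (code (u 0 + 1)).2) hB'
      (sIdx (u 0)).1 (sIdx (u 0)).2 hsidx (Fin.tail w)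
    rw [hSr.1, hSr.2, ← hcw] at hstB
    by_cases hau : AllowedW n (sIdx (u 0)).1 (sIdx (u 0)).2 (Fin.tail u)
    · by_cases haw : AllowedW n (sIdx (u 0)).1 (sIdx (u 0)).2 (Fin.tail w)
      · obtain ⟨F1, F2, F3⟩ := hstA.1 hau
        obtain ⟨G1, G2, G3⟩ := hstB.1 haw
        have hdu := desc_mem n (sharedPt S (u 0)) S.bary hPb
          (sIdx (u 0)).1 (sIdx (u 0)).2 (Fin.tail u)
        have hcase1 : ((cellW (n+1) S u).v k₁ =
              (descW n (sharedPt S (u 0), S.bary) (sIdx (u 0)).1 (sIdx (u 0)).2 (Fin.tail u)).1 ∧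
            (cellW (n+1) S u).v k₂ =
              (descW n (sharedPt S (u 0), S.bary) (sIdx (u 0)).1 (sIdx (u 0)).2 (Fin.tail u)).2) ∨
            ((cellW (n+1) S u).v k₁ =
              (descW n (sharedPt S (u 0), S.bary) (sIdx (u 0)).1 (sIdx (u 0)).2 (Fin.tail u)).2 ∧
            (cellW (n+1) S u).v k₂ =
              (descW n (sharedPt S (u 0), S.bary) (sIdx (u 0)).1 (sIdx (u 0)).2 (Fin.tail u)).1) := by
          rcases F3 k₁ hz1 with f1 | f1 <;> rcases F3 k₂ hz2 with f2 | f2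
          · exact absurd (f1.trans f2.symm) hz12
          · exact Or.inl ⟨f1, f2⟩
          · exact Or.inr ⟨f1, f2⟩
          · exact absurd (f1.trans f2.symm) hz12
        have hz1' : (cellW (n+1) S w).v m₁ ∈ segment ℝ (sharedPt S (u 0)) S.bary := e1 ▸ hz1
        have hz2' : (cellW (n+1) S w).v m₂ ∈ segment ℝ (sharedPt S (u 0)) S.bary := e2 ▸ hz2
        have hz12' : (cellW (n+1) S w).v m₁ ≠ (cellW (n+1) S w).v m₂ := by
          rw [← e1, ← e2]; exact hz12
        have hcase2 : ((cellW (n+1) S w).v m₁ =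
              (descW n (sharedPt S (u 0), S.bary) (sIdx (u 0)).1 (sIdx (u 0)).2 (Fin.tail w)).1 ∧
            (cellW (n+1) S w).v m₂ =
              (descW n (sharedPt S (u 0), S.bary) (sIdx (u 0)).1 (sIdx (u 0)).2 (Fin.tail w)).2) ∨
            ((cellW (n+1) S w).v m₁ =
              (descW n (sharedPt S (u 0), S.bary) (sIdx (u 0)).1 (sIdx (u 0)).2 (Fin.tail w)).2 ∧
            (cellW (n+1) S w).v m₂ =
              (descW n (sharedPt S (u 0), S.bary) (sIdx (u 0)).1 (sIdx (u 0)).2 (Fin.tail w)).1) := by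
          rcases G3 m₁ hz1' with g1 | g1 <;> rcases G3 m₂ hz2' with g2 | g2
          · exact absurd (g1.trans g2.symm) hz12'
          · exact Or.inl ⟨g1, g2⟩
          · exact Or.inr ⟨g1, g2⟩
          · exact absurd (g1.trans g2.symm) hz12'
        have htl : Fin.tail u = Fin.tail w := by
          apply desc_inj n (sharedPt S (u 0)) S.bary hPb (sIdx (u 0)).1 (sIdx (u 0)).2
            hsidx (Fin.tail u) (Fin.tail w) hau haw
          rcases hcase1 with ⟨f1, f2⟩ | ⟨f1, f2⟩ <;> rcases hcase2 with ⟨g1, g2⟩ | ⟨g1, g2⟩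
          · exact Or.inl ⟨by rw [← f1, ← g1]; exact e1, by rw [← f2, ← g2]; exact e2⟩
          · exact Or.inr ⟨by rw [← f1, ← g1]; exact e1, by rw [← f2, ← g2]; exact e2⟩
          · exact Or.inr ⟨by rw [← f2, ← g2]; exact e2, by rw [← f1, ← g1]; exact e1⟩
          · exact Or.inl ⟨by rw [← f2, ← g2]; exact e2, by rw [← f1, ← g1]; exact e1⟩
        exact ⟨htl, hau⟩
      · exfalso
        obtain ⟨z, hz⟩ := hstB.2 haw
        have hz12' : (cellW (n+1) S w).v m₁ ≠ (cellW (n+1) S w).v m₂ := by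
          rw [← e1, ← e2]; exact hz12
        exact hz12' ((hz m₁ (e1 ▸ hz1)).trans (hz m₂ (e2 ▸ hz2)).symm)
    · exfalso
      obtain ⟨z, hz⟩ := hstA.2 hau
      exact hz12 ((hz k₁ hz1).trans (hz k₂ hz2).symm)
  · -- backward direction
    rintro ⟨ht, ha⟩
    obtain ⟨⟨k1, hk1⟩, ⟨k2, hk2⟩, -⟩ := by
      have hstA := side_track n (S.child (code (u 0)).1 (code (u 0)).2) hA'
        (sIdx (u 0)).1 (sIdx (u 0)).2 hsidx (Fin.tail u)
      rw [hSl.1, hSl.2, ← cellW_succ] at hstA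
      exact hstA.1 ha
    obtain ⟨⟨m1, hm1⟩, ⟨m2, hm2⟩, -⟩ := by
      have hstB := side_track n (S.child (code (u 0 + 1)).1 (code (u 0 + 1)).2) hB'
        (sIdx (u 0)).1 (sIdx (u 0)).2 hsidx (Fin.tail w)
      rw [hSr.1, hSr.2, ← hcw] at hstB
      exact hstB.1 (ht ▸ ha)
    rw [← ht] at hm1 hm2
    have hdu := desc_mem n (sharedPt S (u 0)) S.bary hPb
      (sIdx (u 0)).1 (sIdx (u 0)).2 (Fin.tail u)
    have hk12 : k1 ≠ k2 := by
      intro h; apply hdu.2.2; rw [← hk1, h, hk2]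
    have hm12 : m1 ≠ m2 := by
      intro h; apply hdu.2.2; rw [← hm1, h, hm2]
    exact shared_adjacent hne hk12 hm12 (by rw [hk1, hm1]) (by rw [hk2, hm2])

lemma cross_nonconsec (n : ℕ) (S : Triangle) (hS : S.Nondeg) (u w : Wrd (n+1))
    (h0 : u 0 ≠ w 0) (h1 : w 0 ≠ u 0 + 1) (h2 : u 0 ≠ w 0 + 1) :
    (cellW (n+1) S u ≠ cellW (n+1) S w) ∧ ¬ Adjacent (cellW (n+1) S u) (cellW (n+1) S w) := by
  have hndu := cell_nondeg (n+1) S hS u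
  have hOrdu : ∀ k, OrdC S hS (u 0) ((cellW (n+1) S u).v k) := fun k => vertex_ordc n S hS u k
  have hOrdw : ∀ k, OrdC S hS (w 0) ((cellW (n+1) S w).v k) := fun k => vertex_ordc n S hS w k
  constructor
  · intro he
    apply hndu.injective.ne (show (0 : Fin 3) ≠ 1 by decide)
    have hb0 : (cellW (n+1) S u).v 0 = S.bary := by
      refine int_nonconsec hS h0 h1 h2 (hOrdu 0) ?_
      rw [he]; exact hOrdw 0
    have hb1 : (cellW (n+1) S u).v 1 = S.bary := by
      refine int_nonconsec hS h0 h1 h2 (hOrdu 1) ?_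
      rw [he]; exact hOrdw 1
    rw [hb0, hb1]
  · intro hadj
    obtain ⟨k₁, k₂, m₁, m₂, hk12, hm12, e1, e2⟩ := adjacent_shared hndu hadj
    apply hndu.injective.ne hk12
    have hb1 : (cellW (n+1) S u).v k₁ = S.bary := by
      refine int_nonconsec hS h0 h1 h2 (hOrdu k₁) ?_
      rw [e1]; exact hOrdw m₁
    have hb2 : (cellW (n+1) S u).v k₂ = S.bary := by
      refine int_nonconsec hS h0 h1 h2 (hOrdu k₂) ?_
      rw [e2]; exact hOrdw m₂
    rw [hb1, hb2]

lemma cross_adj : ∀ (n : ℕ) (S : Triangle) (hS : S.Nondeg) (u w : Wrd (n+1)), u 0 ≠ w 0 →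
    (cellW (n+1) S u ≠ cellW (n+1) S w) ∧
    (Adjacent (cellW (n+1) S u) (cellW (n+1) S w) ↔
      (Fin.tail u = Fin.tail w ∧
        ((w 0 = u 0 + 1 ∧ AllowedW n (sIdx (u 0)).1 (sIdx (u 0)).2 (Fin.tail u)) ∨
         (u 0 = w 0 + 1 ∧ AllowedW n (sIdx (w 0)).1 (sIdx (w 0)).2 (Fin.tail u))))) := by
  intro n S hS u w hne0
  by_cases hq1 : w 0 = u 0 + 1
  · obtain ⟨hne, hiff⟩ := cross_consec n S hS u w hq1
    refine ⟨hne, hiff.trans ?_⟩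
    constructor
    · rintro ⟨ht, ha⟩; exact ⟨ht, Or.inl ⟨hq1, ha⟩⟩
    · rintro ⟨ht, (⟨-, ha⟩ | ⟨hq2, -⟩)⟩
      · exact ⟨ht, ha⟩
      · exfalso
        apply zmod6_no2 (u 0)
        rw [← hq1, ← hq2]
  · by_cases hq2 : u 0 = w 0 + 1
    · obtain ⟨hne, hiff⟩ := cross_consec n S hS w u hq2
      refine ⟨fun h => hne h.symm, ?_⟩
      constructor
      · intro hadj
        obtain ⟨ht, ha⟩ := hiff.mp (adjacent_symm hadj)
        exact ⟨ht.symm, Or.inr ⟨hq2, ht ▸ ha⟩⟩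
      · rintro ⟨ht, (⟨hq1', -⟩ | ⟨-, ha⟩)⟩
        · exact absurd hq1' hq1
        · exact adjacent_symm (hiff.mpr ⟨ht.symm, ht ▸ ha⟩)
    · obtain ⟨hne, hnadj⟩ := cross_nonconsec n S hS u w hne0 hq1 hq2
      refine ⟨hne, ?_⟩
      constructor
      · intro h; exact absurd h hnadj
      · rintro ⟨ht, (⟨hq1', -⟩ | ⟨hq2', -⟩)⟩
        · exact absurd hq1' hq1
        · exact absurd hq2' hq2

/-- the two oriented conditions of `F1` -/
def C1 (n : ℕ) (u w : Wrd n) : Prop :=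
  (∀ j : Fin n, (j : ℕ) + 1 < n → u j = w j) ∧ ∀ j : Fin n, (j : ℕ) + 1 = n → w j = u j + 1

/-- the two oriented conditions of `Fk` -/
def CK (n k : ℕ) (u w : Wrd n) : Prop :=
  (∀ j : Fin n, (j : ℕ) + 1 ≠ k - 1 → u j = w j) ∧
  (∀ j : Fin n, (j : ℕ) + 1 = k - 1 → (w j = u j + 1 ∧
    ((¬ Even (u j) ∧ ∀ j' : Fin n, (j' : ℕ) + 1 = k → (u j' = 3 ∨ u j' = 4)) ∨
      (Even (u j) ∧ ∀ j' : Fin n, (j' : ℕ) + 1 = k → (u j' = 1 ∨ u j' = 2))))) ∧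
  (∀ j : Fin n, k < (j : ℕ) + 1 → (u j = 0 ∨ u j = 5))

lemma mem_F1 (n : ℕ) (a b : Wrd n) : s(a, b) ∈ F1 n ↔ C1 n a b ∨ C1 n b a := by
  constructor
  · rintro ⟨u, w, heq, h1, h2⟩
    rcases Sym2.eq_iff.mp heq with ⟨rfl, rfl⟩ | ⟨rfl, rfl⟩
    · exact Or.inl ⟨h1, h2⟩
    · exact Or.inr ⟨h1, h2⟩
  · rintro (⟨h1, h2⟩ | ⟨h1, h2⟩)
    · exact ⟨a, b, rfl, h1, h2⟩
    · exact ⟨b, a, Sym2.eq_swap, h1, h2⟩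

lemma mem_Fk (n k : ℕ) (a b : Wrd n) : s(a, b) ∈ Fk n k ↔ CK n k a b ∨ CK n k b a := by
  constructor
  · rintro ⟨u, w, heq, h1, h2, h3⟩
    rcases Sym2.eq_iff.mp heq with ⟨rfl, rfl⟩ | ⟨rfl, rfl⟩
    · exact Or.inl ⟨h1, h2, h3⟩
    · exact Or.inr ⟨h1, h2, h3⟩
  · rintro (⟨h1, h2, h3⟩ | ⟨h1, h2, h3⟩)
    · exact ⟨a, b, rfl, h1, h2, h3⟩
    · exact ⟨b, a, Sym2.eq_swap, h1, h2, h3⟩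

lemma mem_En (n : ℕ) (a b : Wrd n) :
    s(a, b) ∈ En n ↔ ((C1 n a b ∨ C1 n b a) ∨
      ∃ k, (2 ≤ k ∧ k ≤ n) ∧ (CK n k a b ∨ CK n k b a)) := by
  rw [En, Set.mem_union]
  rw [mem_F1]
  apply or_congr Iff.rfl
  simp only [Set.mem_iUnion, Finset.mem_Icc, exists_prop]
  constructor
  · rintro ⟨k, hk, hfk⟩
    exact ⟨k, hk, (mem_Fk n k a b).mp hfk⟩
  · rintro ⟨k, hk, hfk⟩
    exact ⟨k, hk, (mem_Fk n k a b).mpr hfk⟩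

lemma zmod6_succ_ne : ∀ a : ZMod 6, a + 1 ≠ a := by decide

lemma wl_base (u w : Wrd 1) : s(u, w) ∈ En 1 ↔ (w 0 = u 0 + 1 ∨ u 0 = w 0 + 1) := by
  rw [mem_En]
  constructor
  · rintro ((⟨-, h2⟩ | ⟨-, h2⟩) | ⟨k, ⟨hk2, hk1⟩, -⟩)
    · exact Or.inl (h2 0 rfl)
    · exact Or.inr (h2 0 rfl)
    · omega
  · rintro (h | h)
    · refine Or.inl (Or.inl ⟨fun j hj => ?_, fun j hj => ?_⟩)
      · omega
      · have hj0 : j = 0 := Fin.ext (by omega)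
        rw [hj0]; exact h
    · refine Or.inl (Or.inr ⟨fun j hj => ?_, fun j hj => ?_⟩)
      · omega
      · have hj0 : j = 0 := Fin.ext (by omega)
        rw [hj0]; exact h

lemma C1_shift {n : ℕ} (hn : 1 ≤ n) {u w : Wrd (n+1)} (h0 : u 0 = w 0) :
    C1 (n+1) u w ↔ C1 n (Fin.tail u) (Fin.tail w) := by
  constructor
  · rintro ⟨h1, h2⟩
    exact ⟨fun i hi => h1 i.succ (by rw [Fin.val_succ]; omega),
           fun i hi => h2 i.succ (by rw [Fin.val_succ]; omega)⟩
  · rintro ⟨h1, h2⟩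
    constructor
    · intro j hj
      rcases Fin.eq_zero_or_eq_succ j with rfl | ⟨i, rfl⟩
      · exact h0
      · exact h1 i (by rw [Fin.val_succ] at hj; omega)
    · intro j hj
      rcases Fin.eq_zero_or_eq_succ j with rfl | ⟨i, rfl⟩
      · exfalso; rw [Fin.val_zero] at hj; omega
      · exact h2 i (by rw [Fin.val_succ] at hj; omega)

lemma CK_shift {n k : ℕ} (hk : 3 ≤ k) {u w : Wrd (n+1)} (h0 : u 0 = w 0) :
    CK (n+1) k u w ↔ CK n (k-1) (Fin.tail u) (Fin.tail w) := by
  constructor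
  · rintro ⟨h1, h2, h3⟩
    refine ⟨fun i hi => h1 i.succ (by rw [Fin.val_succ]; omega), fun i hi => ?_, fun i hi =>
      h3 i.succ (by rw [Fin.val_succ]; omega)⟩
    obtain ⟨ha, hb⟩ := h2 i.succ (by rw [Fin.val_succ]; omega)
    refine ⟨ha, ?_⟩
    rcases hb with ⟨hev, hcl⟩ | ⟨hev, hcl⟩
    · exact Or.inl ⟨hev, fun i' hi' => hcl i'.succ (by rw [Fin.val_succ]; omega)⟩
    · exact Or.inr ⟨hev, fun i' hi' => hcl i'.succ (by rw [Fin.val_succ]; omega)⟩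
  · rintro ⟨h1, h2, h3⟩
    refine ⟨?_, ?_, ?_⟩
    · intro j hj
      rcases Fin.eq_zero_or_eq_succ j with rfl | ⟨i, rfl⟩
      · exact h0
      · exact h1 i (by rw [Fin.val_succ] at hj; omega)
    · intro j hj
      rcases Fin.eq_zero_or_eq_succ j with rfl | ⟨i, rfl⟩
      · exfalso; rw [Fin.val_zero] at hj; omega
      · rw [Fin.val_succ] at hj
        obtain ⟨ha, hb⟩ := h2 i (by omega)
        refine ⟨ha, ?_⟩
        rcases hb with ⟨hev, hcl⟩ | ⟨hev, hcl⟩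
        · refine Or.inl ⟨hev, fun j' hj' => ?_⟩
          rcases Fin.eq_zero_or_eq_succ j' with rfl | ⟨i', rfl⟩
          · exfalso; rw [Fin.val_zero] at hj'; omega
          · exact hcl i' (by rw [Fin.val_succ] at hj'; omega)
        · refine Or.inr ⟨hev, fun j' hj' => ?_⟩
          rcases Fin.eq_zero_or_eq_succ j' with rfl | ⟨i', rfl⟩
          · exfalso; rw [Fin.val_zero] at hj'; omega
          · exact hcl i' (by rw [Fin.val_succ] at hj'; omega)
    · intro j hj
      rcases Fin.eq_zero_or_eq_succ j with rfl | ⟨i, rfl⟩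
      · exfalso; rw [Fin.val_zero] at hj; omega
      · exact h3 i (by rw [Fin.val_succ] at hj; omega)

lemma allowed01_iff : ∀ (n : ℕ) (y : Wrd n),
    AllowedW n 0 1 y ↔ ∀ j : Fin n, (y j = 0 ∨ y j = 5) := by
  intro n
  induction n with
  | zero => intro y; exact ⟨fun _ j => j.elim0, fun _ => trivial⟩
  | succ n IH =>
      intro y
      rw [allowedW_succ, IH]
      have hc : (code (y 0) = ((0 : Fin 3), (1 : Fin 3)) ∨ code (y 0) = (1, 0)) ↔
          (y 0 = 0 ∨ y 0 = 5) := by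
        have : ∀ a : ZMod 6, (code a = ((0 : Fin 3), (1 : Fin 3)) ∨ code a = (1, 0)) ↔
            (a = 0 ∨ a = 5) := by decide
        exact this (y 0)
      rw [hc]
      constructor
      · rintro ⟨h1, h2⟩ j
        rcases Fin.eq_zero_or_eq_succ j with rfl | ⟨i, rfl⟩
        · exact h1
        · exact h2 i
      · intro h
        exact ⟨h 0, fun i => h i.succ⟩

lemma allowed_iff (n : ℕ) (l : ZMod 6) (y : Wrd n) :
    AllowedW n (sIdx l).1 (sIdx l).2 y ↔
      ((¬ Even l ∧ ∀ j : Fin n, (j : ℕ) = 0 → (y j = 3 ∨ y j = 4)) ∨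
       (Even l ∧ ∀ j : Fin n, (j : ℕ) = 0 → (y j = 1 ∨ y j = 2))) ∧
      (∀ j : Fin n, 1 ≤ (j : ℕ) → (y j = 0 ∨ y j = 5)) := by
  cases n with
  | zero =>
      simp only [AllowedW]
      constructor
      · intro _
        refine ⟨?_, fun j _ => j.elim0⟩
        by_cases he : Even l
        · exact Or.inr ⟨he, fun j _ => j.elim0⟩
        · exact Or.inl ⟨he, fun j _ => j.elim0⟩
      · intro _; trivial
  | succ n =>
      rw [allowedW_succ, allowed01_iff]
      by_cases he : l = 0 ∨ l = 2 ∨ l = 4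
      · have hsi : sIdx l = ((0 : Fin 3), (2 : Fin 3)) := by rw [sIdx, if_pos he]
        have hev : Even l := (even_zmod6 l).mpr he
        rw [hsi]
        have hc : (code (y 0) = ((0 : Fin 3), (2 : Fin 3)) ∨ code (y 0) = (2, 0)) ↔
            (y 0 = 1 ∨ y 0 = 2) := by
          have : ∀ a : ZMod 6, (code a = ((0 : Fin 3), (2 : Fin 3)) ∨ code a = (2, 0)) ↔
              (a = 1 ∨ a = 2) := by decide
          exact this (y 0)
        rw [hc]
        constructor
        · rintro ⟨h1, h2⟩
          refine ⟨Or.inr ⟨hev, fun j hj => ?_⟩, fun j hj => ?_⟩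
          · have hj0 : j = 0 := Fin.ext hj
            rw [hj0]; exact h1
          · rcases Fin.eq_zero_or_eq_succ j with rfl | ⟨i, rfl⟩
            · exfalso; rw [Fin.val_zero] at hj; omega
            · exact h2 i
        · rintro ⟨h1, h2⟩
          constructor
          · rcases h1 with ⟨hne, -⟩ | ⟨-, hcl⟩
            · exact absurd hev hne
            · exact hcl 0 rfl
          · intro i
            exact h2 i.succ (by rw [Fin.val_succ]; omega)
      · have hsi : sIdx l = ((1 : Fin 3), (2 : Fin 3)) := by rw [sIdx, if_neg he]
        have hev : ¬ Even l := fun h => he ((even_zmod6 l).mp h)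
        rw [hsi]
        have hc : (code (y 0) = ((1 : Fin 3), (2 : Fin 3)) ∨ code (y 0) = (2, 1)) ↔
            (y 0 = 3 ∨ y 0 = 4) := by
          have : ∀ a : ZMod 6, (code a = ((1 : Fin 3), (2 : Fin 3)) ∨ code a = (2, 1)) ↔
              (a = 3 ∨ a = 4) := by decide
          exact this (y 0)
        rw [hc]
        constructor
        · rintro ⟨h1, h2⟩
          refine ⟨Or.inl ⟨hev, fun j hj => ?_⟩, fun j hj => ?_⟩
          · have hj0 : j = 0 := Fin.ext hj
            rw [hj0]; exact h1
          · rcases Fin.eq_zero_or_eq_succ j with rfl | ⟨i, rfl⟩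
            · exfalso; rw [Fin.val_zero] at hj; omega
            · exact h2 i
        · rintro ⟨h1, h2⟩
          constructor
          · rcases h1 with ⟨-, hcl⟩ | ⟨hevl, -⟩
            · exact hcl 0 rfl
            · exact absurd hevl hev
          · intro i
            exact h2 i.succ (by rw [Fin.val_succ]; omega)

lemma CK2_iff {n : ℕ} (u w : Wrd (n+1)) :
    CK (n+1) 2 u w ↔ (Fin.tail u = Fin.tail w ∧ w 0 = u 0 + 1 ∧
      AllowedW n (sIdx (u 0)).1 (sIdx (u 0)).2 (Fin.tail u)) := by
  rw [allowed_iff]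
  constructor
  · rintro ⟨h1, h2, h3⟩
    obtain ⟨ha, hb⟩ := h2 0 rfl
    refine ⟨funext fun i => h1 i.succ (by rw [Fin.val_succ]; omega), ha, ?_, ?_⟩
    · rcases hb with ⟨hev, hcl⟩ | ⟨hev, hcl⟩
      · exact Or.inl ⟨hev, fun j hj => hcl j.succ (by rw [Fin.val_succ]; omega)⟩
      · exact Or.inr ⟨hev, fun j hj => hcl j.succ (by rw [Fin.val_succ]; omega)⟩
    · intro j hj
      exact h3 j.succ (by rw [Fin.val_succ]; omega)
  · rintro ⟨h1, h2, h3, h4⟩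
    refine ⟨?_, ?_, ?_⟩
    · intro j hj
      rcases Fin.eq_zero_or_eq_succ j with rfl | ⟨i, rfl⟩
      · exfalso; rw [Fin.val_zero] at hj; omega
      · exact congrFun h1 i
    · intro j hj
      have hj0 : j = 0 := by
        apply Fin.ext; rw [Fin.val_zero]; omega
      subst hj0
      refine ⟨h2, ?_⟩
      rcases h3 with ⟨hev, hcl⟩ | ⟨hev, hcl⟩
      · refine Or.inl ⟨hev, fun j' hj' => ?_⟩
        rcases Fin.eq_zero_or_eq_succ j' with rfl | ⟨i', rfl⟩
        · exfalso; rw [Fin.val_zero] at hj'; omega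
        · exact hcl i' (by rw [Fin.val_succ] at hj'; omega)
      · refine Or.inr ⟨hev, fun j' hj' => ?_⟩
        rcases Fin.eq_zero_or_eq_succ j' with rfl | ⟨i', rfl⟩
        · exfalso; rw [Fin.val_zero] at hj'; omega
        · exact hcl i' (by rw [Fin.val_succ] at hj'; omega)
    · intro j hj
      rcases Fin.eq_zero_or_eq_succ j with rfl | ⟨i, rfl⟩
      · exfalso; rw [Fin.val_zero] at hj; omega
      · exact h4 i (by rw [Fin.val_succ] at hj; omega)

lemma wl_same {n : ℕ} (hn : 1 ≤ n) (u w : Wrd (n+1)) (h : u 0 = w 0) :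
    s(u, w) ∈ En (n+1) ↔ s(Fin.tail u, Fin.tail w) ∈ En n := by
  rw [mem_En, mem_En]
  constructor
  · rintro ((hc | hc) | ⟨k, ⟨hk2, hkn⟩, hck⟩)
    · exact Or.inl (Or.inl ((C1_shift hn h).mp hc))
    · exact Or.inl (Or.inr ((C1_shift hn h.symm).mp hc))
    · by_cases hk3 : 3 ≤ k
      · refine Or.inr ⟨k - 1, ⟨by omega, by omega⟩, ?_⟩
        rcases hck with hck | hck
        · exact Or.inl ((CK_shift hk3 h).mp hck)
        · exact Or.inr ((CK_shift hk3 h.symm).mp hck)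
      · exfalso
        have hk2' : k = 2 := by omega
        subst hk2'
        rcases hck with hck | hck
        · obtain ⟨ha, -⟩ := hck.2.1 0 rfl
          rw [h] at ha
          exact zmod6_succ_ne (w 0) ha.symm
        · obtain ⟨ha, -⟩ := hck.2.1 0 rfl
          rw [← h] at ha
          exact zmod6_succ_ne (u 0) ha.symm
  · rintro ((hc | hc) | ⟨k, ⟨hk2, hkn⟩, hck⟩)
    · exact Or.inl (Or.inl ((C1_shift hn h).mpr hc))
    · exact Or.inl (Or.inr ((C1_shift hn h.symm).mpr hc))
    · refine Or.inr ⟨k + 1, ⟨by omega, by omega⟩, ?_⟩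
      have hs : k + 1 - 1 = k := by omega
      rcases hck with hck | hck
      · refine Or.inl ((CK_shift (by omega) h).mpr ?_)
        rw [hs]; exact hck
      · refine Or.inr ((CK_shift (by omega) h.symm).mpr ?_)
        rw [hs]; exact hck

lemma wl_diff {n : ℕ} (hn : 1 ≤ n) (u w : Wrd (n+1)) (h : u 0 ≠ w 0) :
    s(u, w) ∈ En (n+1) ↔
      (Fin.tail u = Fin.tail w ∧
        ((w 0 = u 0 + 1 ∧ AllowedW n (sIdx (u 0)).1 (sIdx (u 0)).2 (Fin.tail u)) ∨
         (u 0 = w 0 + 1 ∧ AllowedW n (sIdx (w 0)).1 (sIdx (w 0)).2 (Fin.tail u)))) := by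
  rw [mem_En]
  constructor
  · rintro ((hc | hc) | ⟨k, ⟨hk2, hkn⟩, hck⟩)
    · exact absurd (hc.1 0 (by rw [Fin.val_zero]; omega)) h
    · exact absurd (hc.1 0 (by rw [Fin.val_zero]; omega)).symm h
    · by_cases hk3 : 3 ≤ k
      · exfalso
        rcases hck with hck | hck
        · exact h (hck.1 0 (by rw [Fin.val_zero]; omega))
        · exact h (hck.1 0 (by rw [Fin.val_zero]; omega)).symm
      · have hk2' : k = 2 := by omega
        subst hk2'
        rcases hck with hck | hck
        · obtain ⟨ht, ha, hal⟩ := (CK2_iff u w).mp hck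
          exact ⟨ht, Or.inl ⟨ha, hal⟩⟩
        · obtain ⟨ht, ha, hal⟩ := (CK2_iff w u).mp hck
          refine ⟨ht.symm, Or.inr ⟨ha, ?_⟩⟩
          rw [← ht]; exact hal
  · rintro ⟨ht, (⟨ha, hal⟩ | ⟨ha, hal⟩)⟩
    · exact Or.inr ⟨2, ⟨le_refl 2, by omega⟩, Or.inl ((CK2_iff u w).mpr ⟨ht, ha, hal⟩)⟩
    · refine Or.inr ⟨2, ⟨le_refl 2, by omega⟩, Or.inr ((CK2_iff w u).mpr ⟨ht.symm, ha, ?_⟩)⟩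
      rw [ht] at hal; exact hal

lemma main_adj : ∀ (n : ℕ) (S : Triangle) (hS : S.Nondeg) (u w : Wrd (n+1)), u ≠ w →
    cellW (n+1) S u ≠ cellW (n+1) S w ∧
    (Adjacent (cellW (n+1) S u) (cellW (n+1) S w) ↔ s(u, w) ∈ En (n+1)) := by
  intro n
  induction n with
  | zero =>
      intro S hS u w hne
      have h0 : u 0 ≠ w 0 := by
        intro h
        exact hne (funext fun j => by rw [show j = 0 from Fin.eq_zero j]; exact h)
      obtain ⟨hnec, hiff⟩ := cross_adj 0 S hS u w h0
      refine ⟨hnec, hiff.trans ?_⟩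
      rw [wl_base]
      constructor
      · rintro ⟨-, (⟨hq, -⟩ | ⟨hq, -⟩)⟩
        · exact Or.inl hq
        · exact Or.inr hq
      · rintro (hq | hq)
        · exact ⟨funext fun i => i.elim0, Or.inl ⟨hq, trivial⟩⟩
        · exact ⟨funext fun i => i.elim0, Or.inr ⟨hq, trivial⟩⟩
  | succ n IH =>
      intro S hS u w hne
      by_cases h0 : u 0 = w 0
      · have htne : Fin.tail u ≠ Fin.tail w := by
          intro h
          apply hne
          rw [← Fin.cons_self_tail u, ← Fin.cons_self_tail w, h0, h]
        obtain ⟨hnec, hiff⟩ := IH (S.child (code (u 0)).1 (code (u 0)).2)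
          (child_nondeg hS (code_ne _)) (Fin.tail u) (Fin.tail w) htne
        have hcw : cellW (n+1+1) S w =
            cellW (n+1) (S.child (code (u 0)).1 (code (u 0)).2) (Fin.tail w) := by
          rw [cellW_succ, ← h0]
        have hcu : cellW (n+1+1) S u =
            cellW (n+1) (S.child (code (u 0)).1 (code (u 0)).2) (Fin.tail u) := rfl
        rw [hcu, hcw]
        exact ⟨hnec, hiff.trans (wl_same (by omega) u w h0).symm⟩
      · obtain ⟨hnec, hiff⟩ := cross_adj (n+1) S hS u w h0
        exact ⟨hnec, hiff.trans (wl_diff (by omega) u w h0).symm⟩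

lemma BIter_step : ∀ (n : ℕ) (S : Triangle), BIter S (n+1) = ⋃ c ∈ BSub S, BIter c n := by
  intro n
  induction n with
  | zero =>
      intro S
      show (⋃ t ∈ BIter S 0, BSub t) = ⋃ c ∈ BSub S, BIter c 0
      ext t
      simp [BIter]
  | succ n IH =>
      intro S
      show (⋃ t ∈ BIter S (n+1), BSub t) = ⋃ c ∈ BSub S, BIter c (n+1)
      rw [IH S]
      ext x
      simp only [Set.mem_iUnion, exists_prop]
      constructor
      · rintro ⟨t, ⟨c, hc, ht⟩, hx⟩
        refine ⟨c, hc, ?_⟩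
        show x ∈ ⋃ t ∈ BIter c n, BSub t
        simp only [Set.mem_iUnion, exists_prop]
        exact ⟨t, ht, hx⟩
      · rintro ⟨c, hc, hx⟩
        have hx' : x ∈ ⋃ t ∈ BIter c n, BSub t := hx
        simp only [Set.mem_iUnion, exists_prop] at hx'
        obtain ⟨t, ht, hx''⟩ := hx'
        exact ⟨t, ⟨c, hc, ht⟩, hx''⟩

lemma BIter_eq : ∀ (n : ℕ) (S : Triangle), BIter S n = {t | ∃ x : Wrd n, t = cellW n S x} := by
  intro n
  induction n with
  | zero =>
      intro S
      ext t
      simp only [BIter, Set.mem_singleton_iff, Set.mem_setOf_eq]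
      constructor
      · rintro rfl; exact ⟨fun i => i.elim0, rfl⟩
      · rintro ⟨x, rfl⟩; rfl
  | succ n IH =>
      intro S
      rw [BIter_step n S]
      ext t
      simp only [Set.mem_iUnion, exists_prop, Set.mem_setOf_eq]
      constructor
      · rintro ⟨c, ⟨i, j, hij, rfl⟩, hc⟩
        rw [IH] at hc
        obtain ⟨x, rfl⟩ := hc
        obtain ⟨l, hl⟩ := code_surj i j hij
        refine ⟨Fin.cons l x, ?_⟩
        rw [cellW_succ, Fin.cons_zero, hl, Fin.tail_cons]
      · rintro ⟨x, rfl⟩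
        refine ⟨S.child (code (x 0)).1 (code (x 0)).2,
          ⟨(code (x 0)).1, (code (x 0)).2, code_ne _, rfl⟩, ?_⟩
        rw [IH]
        exact ⟨Fin.tail x, rfl⟩

end Aux2
/-- for every `n ≥ 1`, the adjacency graph `A_n` of `Bⁿ(T₀)` is
isomorphic to the graph `G_n = (Xⁿ, E_n)`. -/
theorem stmt18 (T₀ : Triangle) (hT₀ : T₀.Nondeg) (n : ℕ) (hn : 1 ≤ n) :
    Nonempty (triGraph T₀ n ≃g wordGraph n) := by
  cases n with
  | zero => omega
  | succ m =>
      have hmem : ∀ x : Wrd (m+1), cellW (m+1) T₀ x ∈ BIter T₀ (m+1) := by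
        intro x; rw [BIter_eq]; exact ⟨x, rfl⟩
      let f : Wrd (m+1) → {t : Triangle // t ∈ BIter T₀ (m+1)} :=
        fun x => ⟨cellW (m+1) T₀ x, hmem x⟩
      have hinj : Function.Injective f := by
        intro x y hxy
        by_contra hne
        exact (main_adj m T₀ hT₀ x y hne).1 (congrArg Subtype.val hxy)
      have hsurj : Function.Surjective f := by
        rintro ⟨t, ht⟩
        rw [BIter_eq] at ht
        obtain ⟨x, rfl⟩ := ht
        exact ⟨x, rfl⟩
      let e := Equiv.ofBijective f ⟨hinj, hsurj⟩
      refine ⟨RelIso.symm ⟨e, ?_⟩⟩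
      intro a b
      show (triGraph T₀ (m+1)).Adj (e a) (e b) ↔ (wordGraph (m+1)).Adj a b
      simp only [triGraph, wordGraph, SimpleGraph.fromRel_adj]
      by_cases hab : a = b
      · subst hab
        simp
      · obtain ⟨hnec, hiff⟩ := main_adj m T₀ hT₀ a b hab
        constructor
        · rintro ⟨-, h | h⟩
          · exact ⟨hab, Or.inl (hiff.mp h)⟩
          · exact ⟨hab, Or.inl (hiff.mp (adjacent_symm h))⟩
        · rintro ⟨-, h | h⟩
          · exact ⟨fun hh => hnec (congrArg Subtype.val hh), Or.inl (hiff.mpr h)⟩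
          · rw [show (s(b, a) : Sym2 (Wrd (m+1))) = s(a, b) from Sym2.eq_swap] at h
            exact ⟨fun hh => hnec (congrArg Subtype.val hh), Or.inl (hiff.mpr h)⟩
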